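/- arXiv:1903.05183 — 6 statements merged into one kernel-verified Lean document; each statement's English description precedes it below -/
import Mathlib

section
/- Let A ∈ M_n(ℂ) and assume that A is not a 2×2 normal matrix. If k(A) = 2, then for every angle φ ∈ ℝ the largest eigenvalue of the Hermitian matrix Re(e^{-iφ}A) has multiplicity 1, i.e., its eigenspace is one-dimensional. -/
open Matrix Complex

noncomputable section

/-- The Hermitian part `Re A = (A + A*)/2` of a complex matrix. -/
def reM {n : ℕ} (A : Matrix (Fin n) (Fin n) ℂ) : Matrix (Fin n) (Fin n) ℂ :=
  (2⁻¹ : ℂ) • (A + Aᴴ)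

/-- The numerical range `W(A) = {⟨Ax, x⟩ : ‖x‖ = 1}` (here `⟨Ax, x⟩ = x* A x`). -/
def numRange {n : ℕ} (A : Matrix (Fin n) (Fin n) ℂ) : Set ℂ :=
  {z | ∃ x : Fin n → ℂ, star x ⬝ᵥ x = 1 ∧ star x ⬝ᵥ A.mulVec x = z}

/-- The Gau–Wu number `k(A)`: the maximum cardinality of an orthonormal family whose
quadratic-form values all lie on the boundary of `W(A)`. -/
def gauWu {n : ℕ} (A : Matrix (Fin n) (Fin n) ℂ) : ℕ :=
  sSup {k : ℕ | ∃ f : Fin k → (Fin n → ℂ),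
    (∀ i j, star (f i) ⬝ᵥ f j = if i = j then (1 : ℂ) else 0) ∧
    ∀ j, star (f j) ⬝ᵥ A.mulVec (f j) ∈ frontier (numRange A)}

/-!
Write `B = e^{-iφ} A` and `H = Re B`, with largest eigenvalue `μ` and smallest eigenvalue `ν`.
For a unit vector `x`, `Re ⟨B x, x⟩ = ⟨H x, x⟩ ∈ [ν, μ]`, so a unit eigenvector of `H` for `μ` or
for `ν` gives a point of `W(B)` on one of the supporting lines `Re z = μ`, `Re z = ν`, hence on
`∂W(B)`. If `μ` had multiplicity at least two, two orthonormal `μ`-eigenvectors and a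
`ν`-eigenvector (when `ν < μ`), or any three orthonormal vectors (when `H = μ I` and `n ≥ 3`),
would give `k(B) ≥ 3`; when `H = μ I` and `n = 2`, `B* = 2μ - B` commutes with `B`.
Multiplying by `e^{-iφ}` changes neither `k` nor normality.
-/

open Set WithLp Module.End
open scoped InnerProductSpace

theorem IsOpenMap.mem_frontier_of_mapsTo_Icc {X : Type*} [TopologicalSpace X] {f : X → ℝ}
    (hf : IsOpenMap f) {S : Set X} {a b : ℝ} (hS : MapsTo f S (Icc a b)) {z : X} (hz : z ∈ S)
    (hfz : f z = a ∨ f z = b) : z ∈ frontier S := by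
  refine ⟨subset_closure hz, fun hint => ?_⟩
  have : f z ∈ Ioo a b := by
    rw [← interior_Icc]
    exact interior_maximal (image_subset_iff.2 (interior_subset.trans hS)) (hf _ isOpen_interior)
      (mem_image_of_mem f hint)
  rcases hfz with h | h <;> simp [h] at this

namespace LinearMap.IsSymmetric

variable {𝕜 E : Type*} [RCLike 𝕜] [NormedAddCommGroup E] [InnerProductSpace 𝕜 E]
  [FiniteDimensional 𝕜 E] {T : E →ₗ[𝕜] E} (hT : T.IsSymmetric) {n : ℕ}
  (hn : Module.finrank 𝕜 E = n)

theorem re_inner_self_apply_eq_sum (x : E) :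
    RCLike.re ⟪x, T x⟫_𝕜 =
      ∑ i, hT.eigenvalues hn i * ‖⟪hT.eigenvectorBasis hn i, x⟫_𝕜‖ ^ 2 := by
  rw [← (hT.eigenvectorBasis hn).sum_inner_mul_inner x (T x), map_sum]
  refine Finset.sum_congr rfl fun i _ => ?_
  rw [← hT, apply_eigenvectorBasis, inner_smul_left, RCLike.conj_ofReal, mul_left_comm,
    RCLike.re_ofReal_mul, ← inner_conj_symm, RCLike.conj_mul, ← RCLike.ofReal_pow, RCLike.ofReal_re]

theorem re_inner_self_apply_le {μ : ℝ} (hμ : ∀ i, hT.eigenvalues hn i ≤ μ) (x : E) :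
    RCLike.re ⟪x, T x⟫_𝕜 ≤ μ * ‖x‖ ^ 2 := by
  rw [hT.re_inner_self_apply_eq_sum hn, ← (hT.eigenvectorBasis hn).sum_sq_norm_inner_right,
    Finset.mul_sum]
  gcongr with i
  exact hμ i

theorem le_re_inner_self_apply {ν : ℝ} (hν : ∀ i, ν ≤ hT.eigenvalues hn i) (x : E) :
    ν * ‖x‖ ^ 2 ≤ RCLike.re ⟪x, T x⟫_𝕜 := by
  rw [hT.re_inner_self_apply_eq_sum hn, ← (hT.eigenvectorBasis hn).sum_sq_norm_inner_right,
    Finset.mul_sum]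
  gcongr with i
  exact hν i

theorem re_inner_eigenvectorBasis_apply (i : Fin n) :
    RCLike.re ⟪hT.eigenvectorBasis hn i, T (hT.eigenvectorBasis hn i)⟫_𝕜 =
      hT.eigenvalues hn i := by
  simp [inner_smul_right, inner_self_eq_norm_sq_to_K, (hT.eigenvectorBasis hn).orthonormal.1 i]

theorem eq_smul_id_of_forall_eigenvalues_eq {μ : ℝ} (h : ∀ i, hT.eigenvalues hn i = μ) :
    T = (μ : 𝕜) • LinearMap.id :=
  (hT.eigenvectorBasis hn).toBasis.ext fun i => by simp [h i]

theorem exists_ne_eigenvalues_eq {μ : ℝ} (h : 2 ≤ Module.finrank 𝕜 (eigenspace T (μ : 𝕜))) :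
    ∃ i j, i ≠ j ∧ hT.eigenvalues hn i = μ ∧ hT.eigenvalues hn j = μ := by
  rw [← hT.card_filter_eigenvalues_eq hn] at h
  obtain ⟨i, hi, j, hj, hij⟩ := Finset.one_lt_card.1 h
  simp only [Finset.mem_filter, Finset.mem_univ, true_and, RCLike.ofReal_inj] at hi hj
  exact ⟨i, j, hij, hi, hj⟩

end LinearMap.IsSymmetric

theorem EuclideanSpace.star_ofLp_dotProduct_ofLp {𝕜 ι : Type*} [RCLike 𝕜] [Fintype ι]
    (x y : EuclideanSpace 𝕜 ι) : star (ofLp x) ⬝ᵥ ofLp y = ⟪x, y⟫_𝕜 := by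
  rw [EuclideanSpace.inner_eq_star_dotProduct, dotProduct_comm]

theorem Matrix.eigenspace_toLpLin {ι R : Type*} [Fintype ι] [DecidableEq ι] [CommRing R]
    (p : ENNReal) (A : Matrix ι ι R) (μ : R) :
    eigenspace (toLpLin p p A) μ =
      (eigenspace (toLin' A) μ).map (WithLp.linearEquiv p R (ι → R)).symm.toLinearMap := by
  ext x
  rw [Submodule.mem_map_equiv, mem_eigenspace_iff, mem_eigenspace_iff]
  exact (WithLp.linearEquiv p R (ι → R)).injective.eq_iff.symm

theorem Matrix.finrank_eigenspace_toLpLin {ι 𝕜 : Type*} [Fintype ι] [DecidableEq ι] [Field 𝕜]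
    (p : ENNReal) (A : Matrix ι ι 𝕜) (μ : 𝕜) :
    Module.finrank 𝕜 (eigenspace (toLpLin p p A) μ) =
      Module.finrank 𝕜 (eigenspace (toLin' A) μ) := by
  rw [eigenspace_toLpLin, LinearEquiv.finrank_map_eq]

theorem Matrix.hasEigenvalue_toLpLin_iff {ι R : Type*} [Fintype ι] [DecidableEq ι] [CommRing R]
    (p : ENNReal) (A : Matrix ι ι R) (μ : R) :
    HasEigenvalue (toLpLin p p A) μ ↔ HasEigenvalue (toLin' A) μ := by
  rw [hasEigenvalue_iff, hasEigenvalue_iff, eigenspace_toLpLin, Ne, Submodule.map_eq_bot_iff]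

theorem Commute.smul_conjTranspose {ι R : Type*} [Fintype ι] [CommRing R] [StarRing R]
    {A : Matrix ι ι R} (h : Commute A Aᴴ) (c : R) : Commute (c • A) (c • A)ᴴ := by
  rw [conjTranspose_smul]
  exact (h.smul_left c).smul_right (star c)

section

variable {n : ℕ}

theorem isHermitian_reM (B : Matrix (Fin n) (Fin n) ℂ) : (reM B).IsHermitian := by
  rw [IsHermitian, reM, conjTranspose_smul, conjTranspose_add, conjTranspose_conjTranspose,
    add_comm, star_inv₀, star_ofNat]

theorem re_star_dotProduct_mulVec_reM (B : Matrix (Fin n) (Fin n) ℂ) (x : Fin n → ℂ) :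
    (star x ⬝ᵥ reM B *ᵥ x).re = (star x ⬝ᵥ B *ᵥ x).re := by
  have hconj : star x ⬝ᵥ Bᴴ *ᵥ x = star (star x ⬝ᵥ B *ᵥ x) := by
    rw [dotProduct_mulVec, ← star_mulVec, star_dotProduct]
  rw [reM, smul_mulVec, dotProduct_smul, add_mulVec, dotProduct_add, hconj, smul_eq_mul,
    Complex.star_def, Complex.add_conj]
  simp

theorem re_star_ofLp_dotProduct_mulVec_ofLp (B : Matrix (Fin n) (Fin n) ℂ)
    (x : EuclideanSpace ℂ (Fin n)) :
    (star (ofLp x) ⬝ᵥ B *ᵥ ofLp x).re = RCLike.re ⟪x, toEuclideanLin (reM B) x⟫_ℂ := by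
  rw [← EuclideanSpace.star_ofLp_dotProduct_ofLp, ofLp_toLpLin, toLin'_apply,
    RCLike.re_to_complex, re_star_dotProduct_mulVec_reM]

theorem commute_conjTranspose_of_reM_eq_smul_one {B : Matrix (Fin n) (Fin n) ℂ} {c : ℂ}
    (h : reM B = c • 1) : Commute B Bᴴ := by
  have hBH : Bᴴ = (2 * c) • 1 - B := by
    rw [mul_smul, ← h, reM, smul_smul]
    norm_num
  rw [hBH]
  exact ((Commute.one_right B).smul_right _).sub_right (Commute.refl B)

theorem numRange_smul (c : ℂ) (A : Matrix (Fin n) (Fin n) ℂ) :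
    numRange (c • A) = (c * ·) '' numRange A := by
  ext z
  simp only [numRange, smul_mulVec, dotProduct_smul, smul_eq_mul, mem_image, mem_ofPred_eq]
  constructor
  · rintro ⟨x, hx, rfl⟩
    exact ⟨_, ⟨x, hx, rfl⟩, rfl⟩
  · rintro ⟨_, ⟨x, hx, rfl⟩, rfl⟩
    exact ⟨x, hx, rfl⟩

theorem gauWu_smul {c : ℂ} (hc : c ≠ 0) (A : Matrix (Fin n) (Fin n) ℂ) :
    gauWu (c • A) = gauWu A := by
  have hfr : frontier (numRange (c • A)) = (c * ·) '' frontier (numRange A) := by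
    rw [numRange_smul]
    exact ((Homeomorph.mulLeft₀ c hc).image_frontier _).symm
  have hmem (x : Fin n → ℂ) : star x ⬝ᵥ (c • A) *ᵥ x ∈ frontier (numRange (c • A)) ↔
      star x ⬝ᵥ A *ᵥ x ∈ frontier (numRange A) := by
    rw [hfr, smul_mulVec, dotProduct_smul, smul_eq_mul,
      (mul_right_injective₀ hc).mem_set_image]
  simp only [gauWu, hmem]

theorem star_dotProduct_mulVec_mem_numRange (A : Matrix (Fin n) (Fin n) ℂ)
    {x : EuclideanSpace ℂ (Fin n)} (hx : ‖x‖ = 1) : star (ofLp x) ⬝ᵥ A *ᵥ ofLp x ∈ numRange A := by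
  refine ⟨ofLp x, ?_, rfl⟩
  rw [EuclideanSpace.star_ofLp_dotProduct_ofLp, inner_self_eq_norm_sq_to_K, hx]
  simp

theorem mapsTo_re_numRange {B : Matrix (Fin n) (Fin n) ℂ} {a b : ℝ}
    (h : ∀ x, ‖x‖ = 1 → RCLike.re ⟪x, toEuclideanLin (reM B) x⟫_ℂ ∈ Icc a b) :
    MapsTo re (numRange B) (Icc a b) := by
  rintro _ ⟨x, hx, rfl⟩
  have hnorm : ‖toLp 2 x‖ = 1 := by
    have : ‖toLp 2 x‖ ^ 2 = 1 := by
      rw [@norm_sq_eq_re_inner ℂ, ← EuclideanSpace.star_ofLp_dotProduct_ofLp, ofLp_toLp, hx,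
        RCLike.one_re]
    exact (pow_eq_one_iff_of_nonneg (norm_nonneg _) two_ne_zero).1 this
  have := h _ hnorm
  rwa [← re_star_ofLp_dotProduct_mulVec_ofLp] at this

theorem le_gauWu {ι : Type*} [Fintype ι] (A : Matrix (Fin n) (Fin n) ℂ)
    {v : ι → EuclideanSpace ℂ (Fin n)} (hv : Orthonormal ℂ v)
    (hfr : ∀ i, star (ofLp (v i)) ⬝ᵥ A *ᵥ ofLp (v i) ∈ frontier (numRange A)) :
    Fintype.card ι ≤ gauWu A := by
  classical
  have hbdd : BddAbove {k : ℕ | ∃ f : Fin k → (Fin n → ℂ),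
      (∀ i j, star (f i) ⬝ᵥ f j = if i = j then (1 : ℂ) else 0) ∧
      ∀ j, star (f j) ⬝ᵥ A.mulVec (f j) ∈ frontier (numRange A)} := by
    refine ⟨n, fun k ⟨f, hf, _⟩ => ?_⟩
    have : Orthonormal ℂ fun i => toLp 2 (f i) := by
      rw [orthonormal_iff_ite]
      simpa [← EuclideanSpace.star_ofLp_dotProduct_ofLp] using hf
    simpa using this.linearIndependent.fintype_card_le_finrank
  let e := (Fintype.equivFin ι).symm
  refine le_csSup hbdd ⟨fun t => ofLp (v (e t)), fun i j => ?_, fun j => hfr (e j)⟩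
  simp [EuclideanSpace.star_ofLp_dotProduct_ofLp, orthonormal_iff_ite.1 hv, e.injective.eq_iff]

theorem three_le_gauWu_of_two_le_finrank_eigenspace {B : Matrix (Fin n) (Fin n) ℂ}
    (hB : ¬(n = 2 ∧ Commute B Bᴴ)) {μ : ℝ}
    (hmax : ∀ ν : ℝ, HasEigenvalue (toLin' (reM B)) (ν : ℂ) → ν ≤ μ)
    (h2 : 2 ≤ Module.finrank ℂ (eigenspace (toLin' (reM B)) (μ : ℂ))) : 3 ≤ gauWu B := by
  have hT : (toEuclideanLin (reM B)).IsSymmetric :=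
    isSymmetric_toEuclideanLin_iff.2 (isHermitian_reM B)
  have hn : Module.finrank ℂ (EuclideanSpace ℂ (Fin n)) = n := finrank_euclideanSpace_fin
  obtain ⟨i, j, hij, hi, hj⟩ :=
    hT.exists_ne_eigenvalues_eq hn (μ := μ) (by rwa [finrank_eigenspace_toLpLin])
  set ev := hT.eigenvalues hn
  set b := hT.eigenvectorBasis hn
  have hμ (m : Fin n) : ev m ≤ μ :=
    hmax _ ((hasEigenvalue_toLpLin_iff 2 _ _).1 (hT.hasEigenvalue_eigenvalues hn m))
  obtain ⟨k, -, hk⟩ := Finset.univ.exists_min_image ev ⟨i, Finset.mem_univ _⟩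
  have hW : MapsTo re (numRange B) (Icc (ev k) μ) := mapsTo_re_numRange fun x hx =>
    ⟨by simpa [hx] using hT.le_re_inner_self_apply hn (fun m => hk m (Finset.mem_univ _)) x,
      by simpa [hx] using hT.re_inner_self_apply_le hn hμ x⟩
  have hfr (m : Fin n) (hm : ev m = ev k ∨ ev m = μ) :
      star (ofLp (b m)) ⬝ᵥ B *ᵥ ofLp (b m) ∈ frontier (numRange B) :=
    isOpenMap_re.mem_frontier_of_mapsTo_Icc hW
      (star_dotProduct_mulVec_mem_numRange B (b.orthonormal.1 m))
      (by rwa [re_star_ofLp_dotProduct_mulVec_ofLp, hT.re_inner_eigenvectorBasis_apply hn])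
  suffices ∃ s : Finset (Fin n), s.card = 3 ∧ ∀ m ∈ s, ev m = ev k ∨ ev m = μ by
    obtain ⟨s, hs, hsm⟩ := this
    simpa [hs] using le_gauWu B (b.orthonormal.comp _ Subtype.val_injective :
      Orthonormal ℂ fun m : s => b m) fun m => hfr m (hsm m m.2)
  rcases (hk i (Finset.mem_univ _)).lt_or_eq with hlt | heq
  · refine ⟨{i, j, k}, Finset.card_eq_three.2 ⟨i, j, k, hij, ?_, ?_, rfl⟩, by simp [hi, hj]⟩
    · rintro rfl; exact hlt.ne' rfl
    · rintro rfl; exact hlt.ne (hj.trans hi.symm)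
  · have hall (m : Fin n) : ev m = μ :=
      (hμ m).antisymm (by rw [← hi, ← heq]; exact hk m (Finset.mem_univ _))
    by_cases h3 : 3 ≤ n
    · obtain ⟨s, -, hs⟩ := Finset.exists_subset_card_eq (s := (Finset.univ : Finset (Fin n)))
        (n := 3) (by rwa [Finset.card_univ, Fintype.card_fin])
      exact ⟨s, hs, fun m _ => Or.inr (hall m)⟩
    · refine absurd ⟨?_, commute_conjTranspose_of_reM_eq_smul_one (c := μ) ?_⟩ hB
      · have := Fin.val_ne_of_ne hij
        omega
      · apply toEuclideanLin.injective
        rw [hT.eq_smul_id_of_forall_eigenvalues_eq hn hall, map_smul, toLpLin_one]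
        rfl

end

/-- If `A` is not a 2×2 normal matrix and `k(A) = 2`, then for every angle `φ` the largest
eigenvalue of the Hermitian matrix `Re(e^{-iφ}A)` has multiplicity 1. -/
theorem max_eigenvalue_simple_of_gauWu_eq_two {n : ℕ} (A : Matrix (Fin n) (Fin n) ℂ)
    (hA : ¬ (n = 2 ∧ A * Aᴴ = Aᴴ * A))
    (hk : gauWu A = 2) :
    ∀ φ : ℝ, ∀ μ : ℝ,
      Module.End.HasEigenvalue
        (Matrix.toLin' (reM (Complex.exp (-(φ : ℂ) * Complex.I) • A))) (μ : ℂ) →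
      (∀ ν : ℝ,
        Module.End.HasEigenvalue
          (Matrix.toLin' (reM (Complex.exp (-(φ : ℂ) * Complex.I) • A))) (ν : ℂ) → ν ≤ μ) →
      Module.finrank ℂ
        (Module.End.eigenspace
          (Matrix.toLin' (reM (Complex.exp (-(φ : ℂ) * Complex.I) • A))) (μ : ℂ)) = 1 := by
  intro φ μ hev hmax
  set c := Complex.exp (-(φ : ℂ) * Complex.I)
  have hc : c ≠ 0 := Complex.exp_ne_zero _
  have hB : ¬(n = 2 ∧ Commute (c • A) (c • A)ᴴ) := fun ⟨hn, hcomm⟩ =>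
    hA ⟨hn, (by simpa [inv_smul_smul₀ hc] using hcomm.smul_conjTranspose c⁻¹ : Commute A Aᴴ).eq⟩
  refine le_antisymm ?_ (Submodule.one_le_finrank_iff.2 (Module.End.hasEigenvalue_iff.1 hev))
  by_contra! h2
  have := three_le_gauWu_of_two_le_finrank_eigenspace hB hmax h2
  rw [gauWu_smul hc, hk] at this
  omega
end
end

section
/- Let n ≥ 2 and let A ∈ M_n(ℂ). If there exists θ ∈ ℝ such that the Hermitian matrix Re(e^{-iθ}A) has exactly two distinct eigenvalues, then k(A) = n. -/
open Matrix Complex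

noncomputable section

/-- `A` is unitarily irreducible: no nontrivial proper subspace is invariant under
both `A` and `A*`. -/
def UnitarilyIrreducible {n : ℕ} (A : Matrix (Fin n) (Fin n) ℂ) : Prop :=
  ¬ ∃ L : Submodule ℂ (Fin n → ℂ), 0 < Module.finrank ℂ L ∧ Module.finrank ℂ L < n ∧
      (∀ x ∈ L, A.mulVec x ∈ L) ∧ (∀ x ∈ L, Aᴴ.mulVec x ∈ L)

/-!
For unit `x`, `Re (e^{-iθ} ⟨A x, x⟩) = ⟨B x, x⟩` with `B = Re (e^{-iθ} A)`, and this lies between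
the smallest and the largest eigenvalue of `B`. When `B` has only two eigenvalues, every vector of
an orthonormal eigenbasis of `B` attains one of these bounds, so its value `⟨A x, x⟩` lies on a
supporting line of `W(A)` and hence on `∂W(A)`. This gives `n` orthonormal vectors, and no
orthonormal family in `ℂ^n` is larger.
-/

open scoped ComplexOrder MatrixOrder

theorem isExtrOn_univ_of_forall_eq_or_eq {ι α : Type*} [LinearOrder α] {f : ι → α} {a b : α}
    (hf : ∀ i, f i = a ∨ f i = b) (i : ι) : IsExtrOn f Set.univ i := by
  by_contra hne
  simp only [IsExtrOn, IsExtrFilter, IsMinFilter, IsMaxFilter, Filter.eventually_principal,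
    Set.mem_univ, true_implies, not_or, not_forall, not_le] at hne
  obtain ⟨⟨j, hj⟩, ⟨k, hk⟩⟩ := hne
  rcases hf i with hi | hi <;> rcases hf j with hj' | hj' <;> rcases hf k with hk' | hk' <;>
    rw [hi, hj'] at hj <;> rw [hi, hk'] at hk <;> order

theorem isExtrOn_image_iff {α β γ : Type*} [Preorder γ] {f : β → γ} {g : α → β} {s : Set α}
    {a : α} : IsExtrOn f (g '' s) (g a) ↔ IsExtrOn (f ∘ g) s a := by
  simp only [IsExtrOn, IsExtrFilter, IsMinFilter, IsMaxFilter, Filter.eventually_principal,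
    Set.forall_mem_image, Function.comp_apply]

theorem Complex.notMem_interior_of_isExtrOn_re_mul {S : Set ℂ} {c z : ℂ} (hc : c ≠ 0)
    (h : IsExtrOn (fun w => (c * w).re) S z) : z ∉ interior S := by
  intro hz
  -- along the line `z + t c̄` the functional `w ↦ Re (c w)` has slope `|c|² ≠ 0`
  have hline : (fun t : ℝ => (c * (z + t * starRingEnd ℂ c)).re) =
      fun t => (c * z).re + t * normSq c := by
    funext t
    rw [mul_add, mul_left_comm, mul_conj]
    simp
  have hextr : IsLocalExtr (fun w => (c * w).re) (z + ((0 : ℝ) : ℂ) * starRingEnd ℂ c) := by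
    simpa using h.isLocalExtr (mem_interior_iff_mem_nhds.1 hz)
  have hline_extr := hextr.comp_continuous (g := fun t : ℝ => z + t * starRingEnd ℂ c)
    (by fun_prop)
  rw [Function.comp_def, hline] at hline_extr
  have := hline_extr.hasDerivAt_eq_zero (((hasDerivAt_id 0).mul_const _).const_add _)
  simp_all

theorem EuclideanSpace.orthonormal_iff_star_dotProduct {ι κ 𝕜 : Type*} [Fintype ι]
    [DecidableEq κ] [RCLike 𝕜] (v : κ → EuclideanSpace 𝕜 ι) :
    Orthonormal 𝕜 v ↔ ∀ i j, star ⇑(v i) ⬝ᵥ ⇑(v j) = if i = j then 1 else 0 := by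
  simp only [orthonormal_iff_ite, EuclideanSpace.inner_eq_star_dotProduct, dotProduct_comm]

namespace Matrix

variable {n : Type*} [Fintype n]

theorem star_dotProduct_conjTranspose_mulVec {R : Type*} [CommSemiring R] [StarRing R]
    (M : Matrix n n R) (x : n → R) :
    star x ⬝ᵥ Mᴴ *ᵥ x = star (star x ⬝ᵥ M *ᵥ x) := by
  rw [star_dotProduct, star_mulVec, conjTranspose_conjTranspose, ← dotProduct_mulVec]

variable [DecidableEq n] {𝕜 : Type*} [RCLike 𝕜] {B : Matrix n n 𝕜}

namespace IsHermitian

theorem hasEigenvalue_eigenvalues (hB : B.IsHermitian) (i : n) :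
    Module.End.HasEigenvalue (toLin' B) (hB.eigenvalues i : 𝕜) := by
  rw [Module.End.hasEigenvalue_iff_mem_spectrum, spectrum_toLin', hB.spectrum_eq_image_range]
  exact Set.mem_image_of_mem _ (Set.mem_range_self i)

theorem star_dotProduct_mulVec_le (hB : B.IsHermitian) {r : ℝ}
    (hr : ∀ i, hB.eigenvalues i ≤ r) (x : n → 𝕜) :
    star x ⬝ᵥ B *ᵥ x ≤ (r : 𝕜) * (star x ⬝ᵥ x) := by
  have hle : B ≤ algebraMap ℝ _ r := by
    rw [le_algebraMap_iff_spectrum_le hB.isSelfAdjoint, hB.spectrum_real_eq_range_eigenvalues]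
    rintro _ ⟨i, rfl⟩
    exact hr i
  have := (le_iff.mp hle).dotProduct_mulVec_nonneg x
  rwa [Algebra.algebraMap_eq_smul_one, sub_mulVec, smul_mulVec, one_mulVec, dotProduct_sub,
    dotProduct_smul, sub_nonneg, RCLike.real_smul_eq_coe_mul] at this

theorem le_star_dotProduct_mulVec (hB : B.IsHermitian) {r : ℝ}
    (hr : ∀ i, r ≤ hB.eigenvalues i) (x : n → 𝕜) :
    (r : 𝕜) * (star x ⬝ᵥ x) ≤ star x ⬝ᵥ B *ᵥ x := by
  have hle : algebraMap ℝ _ r ≤ B := by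
    rw [algebraMap_le_iff_le_spectrum hB.isSelfAdjoint, hB.spectrum_real_eq_range_eigenvalues]
    rintro _ ⟨i, rfl⟩
    exact hr i
  have := (le_iff.mp hle).dotProduct_mulVec_nonneg x
  rwa [Algebra.algebraMap_eq_smul_one, sub_mulVec, smul_mulVec, one_mulVec, dotProduct_sub,
    dotProduct_smul, sub_nonneg, RCLike.real_smul_eq_coe_mul] at this

theorem isMaxOn_eigenvectorBasis (hB : B.IsHermitian) {i : n}
    (hi : IsMaxOn hB.eigenvalues Set.univ i) :
    IsMaxOn (fun x => RCLike.re (star x ⬝ᵥ B *ᵥ x)) {x | star x ⬝ᵥ x = 1}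
      ⇑(hB.eigenvectorBasis i) := by
  intro x (hx : star x ⬝ᵥ x = 1)
  have := hB.star_dotProduct_mulVec_le (isMaxOn_univ_iff.1 hi) x
  rw [hx, mul_one] at this
  simpa [← hB.eigenvalues_eq] using (RCLike.le_iff_re_im.1 this).1

theorem isMinOn_eigenvectorBasis (hB : B.IsHermitian) {i : n}
    (hi : IsMinOn hB.eigenvalues Set.univ i) :
    IsMinOn (fun x => RCLike.re (star x ⬝ᵥ B *ᵥ x)) {x | star x ⬝ᵥ x = 1}
      ⇑(hB.eigenvectorBasis i) := by
  intro x (hx : star x ⬝ᵥ x = 1)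
  have := hB.le_star_dotProduct_mulVec (isMinOn_univ_iff.1 hi) x
  rw [hx, mul_one] at this
  simpa [← hB.eigenvalues_eq] using (RCLike.le_iff_re_im.1 this).1

theorem isExtrOn_eigenvectorBasis (hB : B.IsHermitian) {i : n}
    (hi : IsExtrOn hB.eigenvalues Set.univ i) :
    IsExtrOn (fun x => RCLike.re (star x ⬝ᵥ B *ᵥ x)) {x | star x ⬝ᵥ x = 1}
      ⇑(hB.eigenvectorBasis i) :=
  hi.elim (fun h => (hB.isMinOn_eigenvectorBasis h).isExtr)
    fun h => (hB.isMaxOn_eigenvectorBasis h).isExtr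

end IsHermitian

end Matrix

section NumericalRange

variable {n : ℕ}

theorem reM_isHermitian (M : Matrix (Fin n) (Fin n) ℂ) : (reM M).IsHermitian := by
  simp [reM, Matrix.IsHermitian, add_comm]

theorem star_dotProduct_reM_mulVec (M : Matrix (Fin n) (Fin n) ℂ) (x : Fin n → ℂ) :
    star x ⬝ᵥ reM M *ᵥ x = ((star x ⬝ᵥ M *ᵥ x).re : ℂ) := by
  rw [reM, smul_mulVec, dotProduct_smul, add_mulVec, dotProduct_add,
    star_dotProduct_conjTranspose_mulVec, star_def, add_conj, smul_eq_mul]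
  push_cast
  ring

theorem numRange_eq_image (A : Matrix (Fin n) (Fin n) ℂ) :
    numRange A = (fun x => star x ⬝ᵥ A *ᵥ x) '' {x | star x ⬝ᵥ x = 1} :=
  rfl

theorem mem_frontier_numRange {A : Matrix (Fin n) (Fin n) ℂ} {c : ℂ} (hc : c ≠ 0)
    {x : Fin n → ℂ} (hx : star x ⬝ᵥ x = 1)
    (h : IsExtrOn (fun y => (star y ⬝ᵥ reM (c • A) *ᵥ y).re) {y | star y ⬝ᵥ y = 1} x) :
    star x ⬝ᵥ A *ᵥ x ∈ frontier (numRange A) := by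
  have hre (y : Fin n → ℂ) :
      (star y ⬝ᵥ reM (c • A) *ᵥ y).re = (c * (star y ⬝ᵥ A *ᵥ y)).re := by
    rw [star_dotProduct_reM_mulVec, ofReal_re, smul_mulVec, dotProduct_smul, smul_eq_mul]
  simp only [hre] at h
  refine ⟨subset_closure ⟨x, hx, rfl⟩, notMem_interior_of_isExtrOn_re_mul hc ?_⟩
  rwa [numRange_eq_image, isExtrOn_image_iff]

theorem gauWu_eq_of_orthonormalBasis {A : Matrix (Fin n) (Fin n) ℂ}
    (b : OrthonormalBasis (Fin n) ℂ (EuclideanSpace ℂ (Fin n)))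
    (hb : ∀ i, star ⇑(b i) ⬝ᵥ A *ᵥ ⇑(b i) ∈ frontier (numRange A)) :
    gauWu A = n := by
  refine IsGreatest.csSup_eq ⟨⟨fun i => ⇑(b i),
    (EuclideanSpace.orthonormal_iff_star_dotProduct b).1 b.orthonormal, hb⟩, ?_⟩
  rintro k ⟨f, hf, -⟩
  simpa using ((EuclideanSpace.orthonormal_iff_star_dotProduct
    (fun i => WithLp.toLp 2 (f i))).2 hf).linearIndependent.fintype_card_le_finrank

end NumericalRange

theorem gauWu_eq_dim_of_two_eigenvalues_general {n : ℕ}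
    (A : Matrix (Fin n) (Fin n) ℂ)
    (h : ∃ θ : ℝ, ∃ α β : ℂ, α ≠ β ∧
        Module.End.HasEigenvalue
          (Matrix.toLin' (reM (Complex.exp (-(θ : ℂ) * Complex.I) • A))) α ∧
        Module.End.HasEigenvalue
          (Matrix.toLin' (reM (Complex.exp (-(θ : ℂ) * Complex.I) • A))) β ∧
        ∀ μ : ℂ,
          Module.End.HasEigenvalue
            (Matrix.toLin' (reM (Complex.exp (-(θ : ℂ) * Complex.I) • A))) μ →
          μ = α ∨ μ = β) :
    gauWu A = n := by
  obtain ⟨θ, α, β, -, -, -, htwo⟩ := h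
  have hB := reM_isHermitian (Complex.exp (-(θ : ℂ) * Complex.I) • A)
  have hext : ∀ i, IsExtrOn hB.eigenvalues Set.univ i := by
    refine isExtrOn_univ_of_forall_eq_or_eq (a := α.re) (b := β.re) fun i => ?_
    rcases htwo _ (hB.hasEigenvalue_eigenvalues i) with hi | hi
    exacts [.inl (by simp [← hi]), .inr (by simp [← hi])]
  have horth := (EuclideanSpace.orthonormal_iff_star_dotProduct _).1
    hB.eigenvectorBasis.orthonormal
  refine gauWu_eq_of_orthonormalBasis hB.eigenvectorBasis fun i => ?_
  exact mem_frontier_numRange (Complex.exp_ne_zero _) (by simpa using horth i i)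
    (hB.isExtrOn_eigenvectorBasis (hext i))

/-- If for some `θ` the Hermitian matrix `Re(e^{-iθ}A)` has exactly two distinct
eigenvalues, then `k(A) = n` (no irreducibility needed). -/
theorem gauWu_eq_dim_of_two_eigenvalues {n : ℕ} (hn : 2 ≤ n)
    (A : Matrix (Fin n) (Fin n) ℂ)
    (h : ∃ θ : ℝ, ∃ α β : ℂ, α ≠ β ∧
        Module.End.HasEigenvalue
          (Matrix.toLin' (reM (Complex.exp (-(θ : ℂ) * Complex.I) • A))) α ∧
        Module.End.HasEigenvalue
          (Matrix.toLin' (reM (Complex.exp (-(θ : ℂ) * Complex.I) • A))) β ∧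
        ∀ μ : ℂ,
          Module.End.HasEigenvalue
            (Matrix.toLin' (reM (Complex.exp (-(θ : ℂ) * Complex.I) • A))) μ →
          μ = α ∨ μ = β) :
    gauWu A = n :=
  gauWu_eq_dim_of_two_eigenvalues_general A h
end
end

section
/- Let A ∈ M_n(ℂ) be tridiagonal (A_{jk} = 0 whenever |j − k| ≥ 2), let S ⊆ {1, …, n−1}, and let A' be the matrix obtained from A by interchanging the entries A_{j,j+1} and A_{j+1,j} for every j ∈ S, leaving all other entries unchanged. Then F_A = F_{A'}, i.e., det(x·Re A + y·Im A + t·I_n) = det(x·Re A' + y·Im A' + t·I_n) for all real x, y, t. -/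
open Matrix Complex

noncomputable section

/-- The matrix `Im A = (A - A*)/(2i)`. -/
def imM {n : ℕ} (A : Matrix (Fin n) (Fin n) ℂ) : Matrix (Fin n) (Fin n) ℂ :=
  ((2 * Complex.I)⁻¹ : ℂ) • (A - Aᴴ)

/-- The base polynomial of `A`, evaluated at real `(x, y, t)`:
`F_A(x,y,t) = det(x·Re A + y·Im A + t·I)`. -/
def basePoly {n : ℕ} (A : Matrix (Fin n) (Fin n) ℂ) (x y t : ℝ) : ℂ :=
  ((x : ℂ) • reM A + (y : ℂ) • imM A + (t : ℂ) • (1 : Matrix (Fin n) (Fin n) ℂ)).det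

/-- Entrywise formula for `x·Re A + y·Im A + t·I`. -/
lemma entry_formula {n : ℕ} (A : Matrix (Fin n) (Fin n) ℂ) (x y t : ℝ) (j k : Fin n) :
    ((x : ℂ) • reM A + (y : ℂ) • imM A + (t : ℂ) • (1 : Matrix (Fin n) (Fin n) ℂ)) j k
      = ((x : ℂ) - y * Complex.I) / 2 * A j k
        + ((x : ℂ) + y * Complex.I) / 2 * (starRingEnd ℂ) (A k j)
        + (if j = k then (t : ℂ) else 0) := by
  have hI : (2 * Complex.I)⁻¹ = -Complex.I / 2 := by
    rw [mul_inv, Complex.inv_I]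
    ring
  simp only [Matrix.add_apply, Matrix.smul_apply, reM, imM, Matrix.smul_apply,
    Matrix.add_apply, Matrix.sub_apply, Matrix.conjTranspose_apply, Matrix.one_apply,
    smul_eq_mul, hI]
  by_cases h : j = k <;> simp [h] <;> ring

/-- Laplace-expansion recursion for the determinant of a tridiagonal matrix. -/
lemma tridiag_det_rec {m : ℕ} (M : Matrix (Fin (m+2)) (Fin (m+2)) ℂ)
    (h : ∀ j k : Fin (m+2), ((j:ℕ)+2 ≤ (k:ℕ) ∨ (k:ℕ)+2 ≤ (j:ℕ)) → M j k = 0) :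
    M.det = M 0 0 * (M.submatrix Fin.succ Fin.succ).det
      - (M 0 1 * M 1 0) * (M.submatrix (Fin.succ ∘ Fin.succ) (Fin.succ ∘ Fin.succ)).det := by
  rw [Matrix.det_succ_row_zero, Fin.sum_univ_succ, Fin.sum_univ_succ]
  have hz : ∀ j : Fin m, M 0 (j.succ.succ) = 0 := fun j => h _ _ (Or.inl (by simp))
  simp only [hz, mul_zero, zero_mul, Finset.sum_const_zero, add_zero]
  have h1 : (Fin.succ (0 : Fin (m+1))) = (1 : Fin (m+2)) := rfl
  rw [h1, Fin.succAbove_zero]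
  have key : (M.submatrix Fin.succ (1 : Fin (m+2)).succAbove).det
      = M 1 0 * (M.submatrix (Fin.succ ∘ Fin.succ) (Fin.succ ∘ Fin.succ)).det := by
    rw [Matrix.det_succ_column_zero, Fin.sum_univ_succ]
    have hz2 : ∀ i : Fin m,
        (M.submatrix Fin.succ (1 : Fin (m+2)).succAbove) i.succ 0 = 0 := by
      intro i
      have : (1 : Fin (m+2)).succAbove 0 = 0 := Fin.succ_succAbove_zero 0
      simp only [Matrix.submatrix_apply, this]
      exact h _ _ (Or.inr (by simp))
    simp only [hz2, mul_zero, zero_mul, Finset.sum_const_zero, add_zero]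
    have e0 : (M.submatrix Fin.succ (1 : Fin (m+2)).succAbove) 0 0 = M 1 0 := by
      simp [Matrix.submatrix_apply, Fin.succ_succAbove_zero]
    have e1 : ((M.submatrix Fin.succ (1 : Fin (m+2)).succAbove).submatrix
        (Fin.succAbove 0) Fin.succ)
        = M.submatrix (Fin.succ ∘ Fin.succ) (Fin.succ ∘ Fin.succ) := by
      ext i j
      simp [Matrix.submatrix_apply, Fin.succAbove_zero, Fin.succ_succAbove_succ]
    rw [e0, e1]
    simp
  rw [key]
  simp
  ring

/-- Two tridiagonal matrices with the same diagonal and the same products of opposing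
off-diagonal entries have the same determinant. -/
lemma det_tridiag_congr : ∀ (n : ℕ) (M M' : Matrix (Fin n) (Fin n) ℂ),
    (∀ j k : Fin n, ((j:ℕ)+2 ≤ (k:ℕ) ∨ (k:ℕ)+2 ≤ (j:ℕ)) → M j k = 0) →
    (∀ j k : Fin n, ((j:ℕ)+2 ≤ (k:ℕ) ∨ (k:ℕ)+2 ≤ (j:ℕ)) → M' j k = 0) →
    (∀ j : Fin n, M' j j = M j j) →
    (∀ j k : Fin n, (k:ℕ) = (j:ℕ) + 1 → M' j k * M' k j = M j k * M k j) →
    M'.det = M.det := by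
  intro n
  induction n using Nat.strong_induction_on with
  | _ n ih =>
    match n with
    | 0 => intro M M' _ _ _ _; simp [Matrix.det_isEmpty]
    | 1 => intro M M' _ _ hd _; rw [Matrix.det_fin_one, Matrix.det_fin_one, hd]
    | (m+2) =>
      intro M M' h h' hd hp
      rw [tridiag_det_rec M h, tridiag_det_rec M' h']
      have e1 : (M'.submatrix Fin.succ Fin.succ).det = (M.submatrix Fin.succ Fin.succ).det := by
        apply ih (m+1) (by omega)
        · intro j k hjk
          simp only [Matrix.submatrix_apply]
          exact h _ _ (by simp only [Fin.val_succ]; omega)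
        · intro j k hjk
          simp only [Matrix.submatrix_apply]
          exact h' _ _ (by simp only [Fin.val_succ]; omega)
        · intro j; exact hd _
        · intro j k hk
          simp only [Matrix.submatrix_apply]
          exact hp _ _ (by simp only [Fin.val_succ]; omega)
      have e2 : (M'.submatrix (Fin.succ ∘ Fin.succ) (Fin.succ ∘ Fin.succ)).det
          = (M.submatrix (Fin.succ ∘ Fin.succ) (Fin.succ ∘ Fin.succ)).det := by
        apply ih m (by omega)
        · intro j k hjk
          simp only [Matrix.submatrix_apply, Function.comp_apply]
          exact h _ _ (by simp only [Fin.val_succ]; omega)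
        · intro j k hjk
          simp only [Matrix.submatrix_apply, Function.comp_apply]
          exact h' _ _ (by simp only [Fin.val_succ]; omega)
        · intro j; exact hd _
        · intro j k hk
          simp only [Matrix.submatrix_apply, Function.comp_apply]
          exact hp _ _ (by simp only [Fin.val_succ]; omega)
      rw [e1, e2, hd 0, hp 0 1 (by simp)]

/-- Let `A` be tridiagonal and let `A'` be obtained from `A` by interchanging the opposing
off-diagonal entries `A_{j,j+1}` and `A_{j+1,j}` for every (1-based) index `j ∈ S`
(rows/columns of `Fin n` are 0-based, so the 1-based index of row `j : Fin n` is `j + 1`).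
Then `F_A = F_{A'}`. -/
theorem basePoly_tridiag_swap {n : ℕ} (A A' : Matrix (Fin n) (Fin n) ℂ) (S : Set ℕ)
    (hS : ∀ j ∈ S, 1 ≤ j ∧ j ≤ n - 1)
    (htri : ∀ j k : Fin n, ((j : ℕ) + 2 ≤ (k : ℕ) ∨ (k : ℕ) + 2 ≤ (j : ℕ)) → A j k = 0)
    (hswap : ∀ j k : Fin n,
      (((k : ℕ) = (j : ℕ) + 1 ∧ (j : ℕ) + 1 ∈ S) ∨
        ((j : ℕ) = (k : ℕ) + 1 ∧ (k : ℕ) + 1 ∈ S)) → A' j k = A k j)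
    (hkeep : ∀ j k : Fin n,
      ¬(((k : ℕ) = (j : ℕ) + 1 ∧ (j : ℕ) + 1 ∈ S) ∨
        ((j : ℕ) = (k : ℕ) + 1 ∧ (k : ℕ) + 1 ∈ S)) → A' j k = A j k) :
    ∀ x y t : ℝ, basePoly A x y t = basePoly A' x y t := by
  intro x y t
  have htri' : ∀ j k : Fin n, ((j : ℕ) + 2 ≤ (k : ℕ) ∨ (k : ℕ) + 2 ≤ (j : ℕ)) → A' j k = 0 := by
    intro j k hjk
    rw [hkeep j k (by rintro (⟨h1, _⟩ | ⟨h1, _⟩) <;> omega)]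
    exact htri j k hjk
  unfold basePoly
  refine (det_tridiag_congr n
    ((x : ℂ) • reM A + (y : ℂ) • imM A + (t : ℂ) • (1 : Matrix (Fin n) (Fin n) ℂ))
    ((x : ℂ) • reM A' + (y : ℂ) • imM A' + (t : ℂ) • (1 : Matrix (Fin n) (Fin n) ℂ))
    ?_ ?_ ?_ ?_).symm
  · intro j k hjk
    have hne : j ≠ k := by rintro rfl; omega
    rw [entry_formula, htri j k hjk, htri k j hjk.symm, if_neg hne]
    simp
  · intro j k hjk
    have hne : j ≠ k := by rintro rfl; omega
    rw [entry_formula, htri' j k hjk, htri' k j hjk.symm, if_neg hne]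
    simp
  · intro j
    rw [entry_formula, entry_formula,
      hkeep j j (by rintro (⟨h1, _⟩ | ⟨h1, _⟩) <;> omega)]
  · intro j k hk
    have hne : j ≠ k := by intro e; rw [e] at hk; omega
    by_cases hjS : (j : ℕ) + 1 ∈ S
    · have e1 : A' j k = A k j := hswap j k (Or.inl ⟨hk, hjS⟩)
      have e2 : A' k j = A j k := hswap k j (Or.inr ⟨hk, hjS⟩)
      have f1 : ((x : ℂ) • reM A' + (y : ℂ) • imM A' + (t : ℂ) • 1) j k
          = ((x : ℂ) • reM A + (y : ℂ) • imM A + (t : ℂ) • 1) k j := by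
        rw [entry_formula, entry_formula, e1, e2, if_neg hne, if_neg hne.symm]
      have f2 : ((x : ℂ) • reM A' + (y : ℂ) • imM A' + (t : ℂ) • 1) k j
          = ((x : ℂ) • reM A + (y : ℂ) • imM A + (t : ℂ) • 1) j k := by
        rw [entry_formula, entry_formula, e1, e2, if_neg hne.symm, if_neg hne]
      rw [f1, f2, mul_comm]
    · have e1 : A' j k = A j k := hkeep j k (by
        rintro (⟨_, h2⟩ | ⟨h1, _⟩) <;> [exact hjS h2; omega])
      have e2 : A' k j = A k j := hkeep k j (by
        rintro (⟨h1, _⟩ | ⟨_, h2⟩) <;> [omega; exact hjS h2])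
      rw [show ((x : ℂ) • reM A' + (y : ℂ) • imM A' + (t : ℂ) • 1) j k
          = ((x : ℂ) • reM A + (y : ℂ) • imM A + (t : ℂ) • 1) j k by
        rw [entry_formula, entry_formula, e1, e2],
        show ((x : ℂ) • reM A' + (y : ℂ) • imM A' + (t : ℂ) • 1) k j
          = ((x : ℂ) • reM A + (y : ℂ) • imM A + (t : ℂ) • 1) k j by
        rw [entry_formula, entry_formula, e1, e2]]
end
end

section
/- Let A ∈ M_n(ℂ) be tridiagonal (A_{jk} = 0 whenever |j − k| ≥ 2), let S ⊆ {1, …, n−1}, and let A' be the matrix obtained from A by interchanging the entries A_{j,j+1} and A_{j+1,j} for every j ∈ S, leaving all other entries unchanged. Then W(A) = W(A'). -/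
open Matrix Complex

noncomputable section

/-!
Given a unit vector `x`, keep the moduli `|xⱼ|` and choose new phases recursively along the
path `1 - 2 - ⋯ - n`, so that the new vector `y` satisfies `ȳⱼ yⱼ₊₁ = x̄ⱼ xⱼ₊₁` when `j ∉ S` and
`ȳⱼ yⱼ₊₁ = xⱼ x̄ⱼ₊₁` when `j ∈ S`. Since `A` is tridiagonal, `⟨Ax, x⟩` only involves the
products `x̄ⱼ xₖ` with `|j - k| ≤ 1`, so `⟨A'y, y⟩ = ⟨Ax, x⟩`. This gives `W(A) ⊆ W(A')`, and
the situation is symmetric in `A` and `A'`.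
-/

open ComplexConjugate

section SwapOn

variable {α : Type*} (r : α → α → Prop) [DecidableRel r] (hr : ∀ a b, r a b → r b a)

def swapOn : Equiv.Perm (α × α) :=
  Function.Involutive.toPerm (fun p => if r p.1 p.2 then p.swap else p) fun p => by
    by_cases h : r p.1 p.2
    · simp [h, hr _ _ h]
    · simp [h]

variable {r}

lemma swapOn_of_rel {a b : α} (h : r a b) : swapOn r hr (a, b) = (b, a) := if_pos h

lemma swapOn_of_not_rel {a b : α} (h : ¬r a b) : swapOn r hr (a, b) = (a, b) := if_neg h

end SwapOn

lemma star_dotProduct_mulVec_eq_of_perm {ι R : Type*} [Fintype ι]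
    [NonUnitalNonAssocSemiring R] [Star R] (A B : Matrix ι ι R) (x y : ι → R)
    (σ : Equiv.Perm (ι × ι))
    (h : ∀ p : ι × ι, star (y p.1) * (B p.1 p.2 * y p.2) =
      star (x (σ p).1) * (A (σ p).1 (σ p).2 * x (σ p).2)) :
    star y ⬝ᵥ B *ᵥ y = star x ⬝ᵥ A *ᵥ x := by
  simp only [dotProduct, mulVec, Pi.star_apply, Finset.mul_sum]
  rw [← Fintype.sum_prod_type', ← Fintype.sum_prod_type']
  exact Fintype.sum_equiv σ _ _ h

lemma star_dotProduct_self_eq_of_norm_eq {ι : Type*} [Fintype ι] {x y : ι → ℂ}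
    (h : ∀ i, ‖y i‖ = ‖x i‖) : star y ⬝ᵥ y = star x ⬝ᵥ x := by
  simp only [dotProduct, Pi.star_apply, Complex.star_def, conj_mul', h]

lemma exists_norm_eq_and_conj_mul_succ_eq (x c : ℕ → ℂ)
    (hc : ∀ j, ‖c j‖ = ‖x j‖ * ‖x (j + 1)‖) :
    ∃ y : ℕ → ℂ, (∀ j, ‖y j‖ = ‖x j‖) ∧ ∀ j, conj (y j) * y (j + 1) = c j := by
  set θ : ℕ → ℝ := fun j => ∑ i ∈ Finset.range j, arg (c i)
  refine ⟨fun j => ‖x j‖ * exp (θ j * I), fun j => by simp, fun j => ?_⟩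
  have hθ : exp (θ (j + 1) * I) = exp (θ j * I) * exp (arg (c j) * I) := by
    simp only [θ, Finset.sum_range_succ, ofReal_add, add_mul, exp_add]
  have hunit : conj (exp (θ j * I)) * exp (θ j * I) = 1 := by
    rw [conj_mul', norm_exp_ofReal_mul_I, ofReal_one, one_pow]
  calc conj (‖x j‖ * exp (θ j * I)) * (‖x (j + 1)‖ * exp (θ (j + 1) * I))
      = ‖c j‖ * exp (arg (c j) * I) := by
        rw [hθ, hc, map_mul, conj_ofReal, ofReal_mul]
        linear_combination (‖x j‖ * ‖x (j + 1)‖ * exp (arg (c j) * I) : ℂ) * hunit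
    _ = c j := norm_mul_exp_arg_mul_I _

/-- `S` holds 1-based indices, while the rows of `Fin n` are 0-based. -/
def IsSwappedPair {n : ℕ} (S : Set ℕ) (j k : Fin n) : Prop :=
  ((k : ℕ) = (j : ℕ) + 1 ∧ (j : ℕ) + 1 ∈ S) ∨ ((j : ℕ) = (k : ℕ) + 1 ∧ (k : ℕ) + 1 ∈ S)

lemma IsSwappedPair.symm {n : ℕ} {S : Set ℕ} {j k : Fin n} (h : IsSwappedPair S j k) :
    IsSwappedPair S k j :=
  Or.symm h

lemma IsSwappedPair.le_add_one {n : ℕ} {S : Set ℕ} {j k : Fin n} (h : IsSwappedPair S j k) :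
    (j : ℕ) ≤ k + 1 ∧ (k : ℕ) ≤ j + 1 := by
  unfold IsSwappedPair at h
  omega

def IsTridiagonal {n : ℕ} {R : Type*} [Zero R] (A : Matrix (Fin n) (Fin n) R) : Prop :=
  ∀ j k : Fin n, ((j : ℕ) + 2 ≤ (k : ℕ) ∨ (k : ℕ) + 2 ≤ (j : ℕ)) → A j k = 0

lemma IsTridiagonal.apply_eq_zero {n : ℕ} {R : Type*} [Zero R] {A : Matrix (Fin n) (Fin n) R}
    (hA : IsTridiagonal A)
    {j k : Fin n} (hjk : ¬((j : ℕ) ≤ k + 1 ∧ (k : ℕ) ≤ j + 1)) : A j k = 0 :=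
  hA j k (by omega)

open Classical in
lemma exists_norm_eq_and_conj_mul_eq_of_succ {n : ℕ} (S : Set ℕ) (x : Fin n → ℂ) :
    ∃ y : Fin n → ℂ, (∀ j, ‖y j‖ = ‖x j‖) ∧ ∀ j k : Fin n, (k : ℕ) = j + 1 →
      conj (y j) * y k = if (j : ℕ) + 1 ∈ S then conj (x k) * x j else conj (x j) * x k := by
  set x' : ℕ → ℂ := fun j => if h : j < n then x ⟨j, h⟩ else 0
  have hx' : ∀ j : Fin n, x' j = x j := fun j => dif_pos j.isLt
  obtain ⟨y, hnorm, hsucc⟩ := exists_norm_eq_and_conj_mul_succ_eq x'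
    (fun j => if j + 1 ∈ S then conj (x' (j + 1)) * x' j else conj (x' j) * x' (j + 1))
    (fun j => by split_ifs <;> simp [mul_comm])
  refine ⟨fun j => y j, fun j => by simp only [hnorm, hx'], fun j k hk => ?_⟩
  have h := hsucc j
  rw [← hk, hx', hx'] at h
  simpa only [hk] using h

open Classical in
lemma conj_mul_eq_ite_of_le_add_one {n : ℕ} {S : Set ℕ} {x y : Fin n → ℂ}
    (hnorm : ∀ j, ‖y j‖ = ‖x j‖)
    (hsucc : ∀ j k : Fin n, (k : ℕ) = j + 1 →
      conj (y j) * y k = if (j : ℕ) + 1 ∈ S then conj (x k) * x j else conj (x j) * x k)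
    {j k : Fin n} (hjk : (j : ℕ) ≤ k + 1 ∧ (k : ℕ) ≤ j + 1) :
    conj (y j) * y k = if IsSwappedPair S j k then conj (x k) * x j else conj (x j) * x k := by
  rcases Nat.lt_trichotomy j k with hlt | heq | hgt
  · have hk : (k : ℕ) = j + 1 := by omega
    have hS : IsSwappedPair S j k ↔ (j : ℕ) + 1 ∈ S := by
      simp only [IsSwappedPair, hk, true_and]
      exact or_iff_left fun h => absurd h.1 (by omega)
    rw [hsucc j k hk]
    simp only [hS]
  · obtain rfl := Fin.ext heq
    simp [conj_mul', hnorm]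
  · have hj : (j : ℕ) = k + 1 := by omega
    have hS : IsSwappedPair S j k ↔ (k : ℕ) + 1 ∈ S := by
      simp only [IsSwappedPair, hj, true_and]
      exact or_iff_right fun h => absurd h.1 (by omega)
    have h := congrArg conj (hsucc k j hj)
    simp only [map_mul, conj_conj, apply_ite conj] at h
    rw [mul_comm, h]
    simp only [hS]
    split_ifs <;> ring

lemma numRange_subset_of_isSwappedPair {n : ℕ} {A A' : Matrix (Fin n) (Fin n) ℂ} {S : Set ℕ}
    (hA : IsTridiagonal A) (hswap : ∀ j k, IsSwappedPair S j k → A' j k = A k j)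
    (hkeep : ∀ j k, ¬IsSwappedPair S j k → A' j k = A j k) :
    numRange A ⊆ numRange A' := by
  classical
  rintro z ⟨x, hx, rfl⟩
  obtain ⟨y, hnorm, hsucc⟩ := exists_norm_eq_and_conj_mul_eq_of_succ S x
  refine ⟨y, (star_dotProduct_self_eq_of_norm_eq hnorm).trans hx,
    star_dotProduct_mulVec_eq_of_perm A A' x y
      (swapOn (IsSwappedPair S) fun _ _ => IsSwappedPair.symm) ?_⟩
  rintro ⟨j, k⟩
  by_cases hjk : (j : ℕ) ≤ k + 1 ∧ (k : ℕ) ≤ j + 1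
  · have hy := conj_mul_eq_ite_of_le_add_one hnorm hsucc hjk
    simp only [Complex.star_def]
    by_cases hs : IsSwappedPair S j k
    · rw [swapOn_of_rel _ hs, hswap j k hs]
      rw [if_pos hs] at hy
      linear_combination A k j * hy
    · rw [swapOn_of_not_rel _ hs, hkeep j k hs]
      rw [if_neg hs] at hy
      linear_combination A j k * hy
  · have hs : ¬IsSwappedPair S j k := fun h => hjk h.le_add_one
    rw [swapOn_of_not_rel _ hs, hkeep j k hs, hA.apply_eq_zero hjk]
    simp

theorem numRange_tridiag_swap_general {n : ℕ} (A A' : Matrix (Fin n) (Fin n) ℂ) (S : Set ℕ)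
    (htri : ∀ j k : Fin n, ((j : ℕ) + 2 ≤ (k : ℕ) ∨ (k : ℕ) + 2 ≤ (j : ℕ)) → A j k = 0)
    (hswap : ∀ j k : Fin n,
      (((k : ℕ) = (j : ℕ) + 1 ∧ (j : ℕ) + 1 ∈ S) ∨
        ((j : ℕ) = (k : ℕ) + 1 ∧ (k : ℕ) + 1 ∈ S)) → A' j k = A k j)
    (hkeep : ∀ j k : Fin n,
      ¬(((k : ℕ) = (j : ℕ) + 1 ∧ (j : ℕ) + 1 ∈ S) ∨
        ((j : ℕ) = (k : ℕ) + 1 ∧ (k : ℕ) + 1 ∈ S)) → A' j k = A j k) :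
    numRange A = numRange A' := by
  have hA' : IsTridiagonal A' := fun j k hjk =>
    (hkeep j k fun h => by have := IsSwappedPair.le_add_one (S := S) h; omega).trans (htri j k hjk)
  exact (numRange_subset_of_isSwappedPair htri hswap hkeep).antisymm
    (numRange_subset_of_isSwappedPair hA' (fun j k h => (hswap k j h.symm).symm)
      fun j k h => (hkeep j k h).symm)

/-- Let `A` be tridiagonal and let `A'` be obtained from `A` by interchanging the opposing
off-diagonal entries `A_{j,j+1}` and `A_{j+1,j}` for every (1-based) index `j ∈ S`
(rows/columns of `Fin n` are 0-based, so the 1-based index of row `j : Fin n` is `j + 1`).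
Then `W(A) = W(A')`. -/
theorem numRange_tridiag_swap {n : ℕ} (A A' : Matrix (Fin n) (Fin n) ℂ) (S : Set ℕ)
    (hS : ∀ j ∈ S, 1 ≤ j ∧ j ≤ n - 1)
    (htri : ∀ j k : Fin n, ((j : ℕ) + 2 ≤ (k : ℕ) ∨ (k : ℕ) + 2 ≤ (j : ℕ)) → A j k = 0)
    (hswap : ∀ j k : Fin n,
      (((k : ℕ) = (j : ℕ) + 1 ∧ (j : ℕ) + 1 ∈ S) ∨
        ((j : ℕ) = (k : ℕ) + 1 ∧ (k : ℕ) + 1 ∈ S)) → A' j k = A k j)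
    (hkeep : ∀ j k : Fin n,
      ¬(((k : ℕ) = (j : ℕ) + 1 ∧ (j : ℕ) + 1 ∈ S) ∨
        ((j : ℕ) = (k : ℕ) + 1 ∧ (k : ℕ) + 1 ∈ S)) → A' j k = A j k) :
    numRange A = numRange A' :=
  numRange_tridiag_swap_general A A' S htri hswap hkeep
end
end

section
/- Let n ≥ 3 and let a, b, c ∈ ℂ with |b| ≠ |c|. Then the tridiagonal Toeplitz matrix T_n(a, b, c) is unitarily irreducible. -/
open Matrix Complex

noncomputable section

/-- The `n×n` tridiagonal Toeplitz matrix `T_n(a,b,c)` with diagonal `a`, first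
superdiagonal `b`, and first subdiagonal `c`. -/
def triToeplitz (n : ℕ) (a b c : ℂ) : Matrix (Fin n) (Fin n) ℂ :=
  Matrix.of fun j k =>
    if (j : ℕ) = (k : ℕ) then a
    else if (k : ℕ) = (j : ℕ) + 1 then b
    else if (j : ℕ) = (k : ℕ) + 1 then c
    else 0

/-! With the shift `S` (ones on the superdiagonal), `T = a + b S + c Sᵀ`, so the *-algebra generated
by `T` contains `N = b S + c Sᵀ` and `N* = c̄ S + b̄ Sᵀ`. The coefficient determinant is
`|b|² - |c|² ≠ 0`, so `S` itself lies in that algebra. Together with `Sᵀ = S*` it generates every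
matrix unit, hence the whole matrix algebra, and a subspace invariant under every matrix is `0` or
everything. -/

section Shift

variable (R : Type*) [CommRing R]

def shiftMatrix (n : ℕ) : Matrix (Fin n) (Fin n) R :=
  of fun i j => if (j : ℕ) = i + 1 then 1 else 0

/-- Matrix units indexed by natural numbers; out-of-range indices give `0`, which makes the
shift identities below hold without bounds. -/
def natSingle (n i j : ℕ) : Matrix (Fin n) (Fin n) R :=
  of fun r s => if (r : ℕ) = i ∧ (s : ℕ) = j then 1 else 0

variable {R} {n : ℕ}

theorem Fin.sum_ite_val_eq {M : Type*} [AddCommMonoid M] (m : ℕ) (f : Fin n → M) :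
    ∑ l : Fin n, (if (l : ℕ) = m then f l else 0) = if h : m < n then f ⟨m, h⟩ else 0 := by
  split_ifs with h
  · rw [Finset.sum_eq_single ⟨m, h⟩ (fun l _ hl => if_neg fun e => hl (Fin.ext e)) (by simp)]
    simp
  · exact Finset.sum_eq_zero fun l _ => if_neg (by omega)

theorem natSingle_val (i j : Fin n) : natSingle R n i j = single i j 1 := by
  ext r s
  simp [natSingle, single_apply, Fin.ext_iff, eq_comm]

theorem transpose_natSingle (i j : ℕ) : (natSingle R n i j)ᵀ = natSingle R n j i := by
  ext r s
  simp [natSingle, and_comm]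

theorem shiftMatrix_transpose_mul_natSingle (i j : ℕ) :
    (shiftMatrix R n)ᵀ * natSingle R n i j = natSingle R n (i + 1) j := by
  ext r s
  simp only [shiftMatrix, natSingle, ite_and, mul_apply, transpose_apply, of_apply, mul_ite,
    mul_one, mul_zero, Fin.sum_ite_val_eq]
  split_ifs <;> first | rfl | omega

theorem natSingle_mul_shiftMatrix (i j : ℕ) :
    natSingle R n i j * shiftMatrix R n = natSingle R n i (j + 1) := by
  rw [← transpose_transpose (natSingle R n i j * _), transpose_mul, transpose_natSingle,
    shiftMatrix_transpose_mul_natSingle, transpose_natSingle]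

theorem shiftMatrix_transpose_mul_self_add_natSingle :
    (shiftMatrix R n)ᵀ * shiftMatrix R n + natSingle R n 0 0 = 1 := by
  ext ⟨_ | r, hr⟩ s
  · simp [mul_apply, shiftMatrix, natSingle, one_apply, Fin.ext_iff, eq_comm]
  · rw [Matrix.add_apply, mul_apply,
      Finset.sum_eq_single ⟨r, by omega⟩ (fun l _ hl => ?_) (by simp)]
    · simp [shiftMatrix, natSingle, one_apply, Fin.ext_iff, eq_comm]
    · simp only [ne_eq, Fin.ext_iff, shiftMatrix, transpose_apply, of_apply,
        Nat.add_right_cancel_iff, mul_ite, mul_one, mul_zero, ite_eq_right_iff] at hl ⊢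
      omega

theorem star_shiftMatrix [StarRing R] : star (shiftMatrix R n) = (shiftMatrix R n)ᵀ := by
  ext i j
  simp [shiftMatrix, apply_ite star]

/-- `E₀₀ = 1 - SᵀS` and `Eᵢⱼ = (Sᵀ)ⁱ E₀₀ Sʲ`. -/
theorem Subalgebra.eq_top_of_shiftMatrix_mem {A : Subalgebra R (Matrix (Fin n) (Fin n) R)}
    (hS : shiftMatrix R n ∈ A) (hST : (shiftMatrix R n)ᵀ ∈ A) : A = ⊤ := by
  have hE : ∀ i j, natSingle R n i j ∈ A := by
    intro i j
    induction i with
    | zero =>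
      induction j with
      | zero =>
        rw [← add_sub_cancel_left ((shiftMatrix R n)ᵀ * shiftMatrix R n) (natSingle R n 0 0),
          shiftMatrix_transpose_mul_self_add_natSingle]
        exact sub_mem (one_mem A) (mul_mem hST hS)
      | succ j ih => exact natSingle_mul_shiftMatrix (R := R) 0 j ▸ mul_mem ih hS
    | succ i ih => exact shiftMatrix_transpose_mul_natSingle (R := R) i j ▸ mul_mem hST ih
  refine eq_top_iff.2 fun M _ => ?_
  rw [matrix_eq_sum_single M]
  refine sum_mem fun i _ => sum_mem fun j _ => ?_
  simpa [natSingle_val, smul_single] using A.smul_mem (hE i j) (M i j)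

end Shift

section Stabilizer

variable {K : Type*} {ι : Type*} [Fintype ι] [DecidableEq ι]

def Submodule.matrixStabilizer [CommSemiring K] (L : Submodule K (ι → K)) :
    Subalgebra K (Matrix ι ι K) where
  carrier := {M | ∀ x ∈ L, M *ᵥ x ∈ L}
  mul_mem' hM hN x hx := by
    rw [← mulVec_mulVec]
    exact hM _ (hN x hx)
  add_mem' hM hN x hx := by
    rw [add_mulVec]
    exact L.add_mem (hM x hx) (hN x hx)
  algebraMap_mem' r x hx := by
    rw [Algebra.algebraMap_eq_smul_one, smul_mulVec, one_mulVec]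
    exact L.smul_mem r hx

theorem Submodule.eq_bot_or_eq_top_of_matrixStabilizer_eq_top [Field K] {L : Submodule K (ι → K)}
    (h : L.matrixStabilizer = ⊤) : L = ⊥ ∨ L = ⊤ := by
  refine or_iff_not_imp_left.2 fun hL => ?_
  obtain ⟨x, hx, hx0⟩ := L.exists_mem_ne_zero_of_ne_bot hL
  obtain ⟨j, hj⟩ := Function.ne_iff.1 hx0
  refine eq_top_iff'.2 fun y => ?_
  -- the rank-one matrix `y ⬝ (x j)⁻¹ eⱼᵀ` sends `x` to `y`
  have hM : vecMulVec y (Pi.single j (x j)⁻¹) ∈ L.matrixStabilizer := h ▸ Algebra.mem_top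
  simpa [vecMulVec_mulVec, single_dotProduct, inv_mul_cancel₀ hj] using hM x hx

end Stabilizer

section TriToeplitz

open ComplexConjugate

variable {n : ℕ} {a b c : ℂ}

theorem triToeplitz_eq :
    triToeplitz n a b c = a • 1 + b • shiftMatrix ℂ n + c • (shiftMatrix ℂ n)ᵀ := by
  ext i j
  simp only [triToeplitz, shiftMatrix, of_apply, Matrix.add_apply, Matrix.smul_apply, one_apply,
    transpose_apply, Fin.ext_iff, smul_eq_mul, mul_ite, mul_one, mul_zero]
  split_ifs <;> first | omega | simp

theorem shiftMatrix_mem_starAlgebra_adjoin_triToeplitz (hbc : ‖b‖ ≠ ‖c‖) :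
    shiftMatrix ℂ n ∈ StarAlgebra.adjoin ℂ {triToeplitz n a b c} := by
  set S := shiftMatrix ℂ n
  set B := StarAlgebra.adjoin ℂ {triToeplitz n a b c}
  have hN : b • S + c • Sᵀ ∈ B := by
    have hT : triToeplitz n a b c ∈ B := StarAlgebra.subset_adjoin ℂ _ rfl
    rw [triToeplitz_eq, add_assoc] at hT
    simpa using sub_mem hT (B.smul_mem (one_mem B) a)
  have hNstar : star (b • S + c • Sᵀ) = conj c • S + conj b • Sᵀ := by
    rw [star_add, star_smul, star_smul, star_shiftMatrix, ← star_shiftMatrix, star_star]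
    exact add_comm _ _
  set d := conj b * b - conj c * c
  have hd : d ≠ 0 := by
    simp only [d, conj_mul', sub_ne_zero]
    exact_mod_cast (pow_left_inj₀ (norm_nonneg b) (norm_nonneg c) two_ne_zero).not.2 hbc
  have hdS : d • S = conj b • (b • S + c • Sᵀ) - c • (conj c • S + conj b • Sᵀ) := by
    module
  have := B.smul_mem (sub_mem (B.smul_mem hN (conj b)) (B.smul_mem (hNstar ▸ star_mem hN) c)) d⁻¹
  rwa [← hdS, inv_smul_smul₀ hd] at this

theorem starAlgebra_adjoin_triToeplitz_eq_top (hbc : ‖b‖ ≠ ‖c‖) :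
    StarAlgebra.adjoin ℂ {triToeplitz n a b c} = ⊤ := by
  set B := StarAlgebra.adjoin ℂ {triToeplitz n a b c}
  have hS : shiftMatrix ℂ n ∈ B := shiftMatrix_mem_starAlgebra_adjoin_triToeplitz hbc
  have hST : (shiftMatrix ℂ n)ᵀ ∈ B := by
    rw [← star_shiftMatrix]
    exact star_mem hS
  apply StarSubalgebra.toSubalgebra_injective
  rw [StarSubalgebra.top_toSubalgebra]
  exact Subalgebra.eq_top_of_shiftMatrix_mem hS hST

end TriToeplitz

theorem triToeplitz_unitarilyIrreducible_general {n : ℕ} (a b c : ℂ)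
    (hbc : ‖b‖ ≠ ‖c‖) :
    UnitarilyIrreducible (triToeplitz n a b c) := by
  rintro ⟨L, hpos, hlt, hA, hAH⟩
  have hle : (StarAlgebra.adjoin ℂ {triToeplitz n a b c}).toSubalgebra ≤ L.matrixStabilizer := by
    rw [StarAlgebra.adjoin_toSubalgebra, Algebra.adjoin_le_iff, Set.star_singleton,
      Set.singleton_union, Set.insert_subset_iff, Set.singleton_subset_iff]
    exact ⟨hA, hAH⟩
  rw [starAlgebra_adjoin_triToeplitz_eq_top hbc, StarSubalgebra.top_toSubalgebra] at hle
  rcases L.eq_bot_or_eq_top_of_matrixStabilizer_eq_top (top_unique hle) with rfl | rfl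
  · simp at hpos
  · simp at hlt

/-- For `n ≥ 3` and `|b| ≠ |c|`, the tridiagonal Toeplitz matrix `T_n(a,b,c)` is
unitarily irreducible. -/
theorem triToeplitz_unitarilyIrreducible {n : ℕ} (hn : 3 ≤ n) (a b c : ℂ)
    (hbc : ‖b‖ ≠ ‖c‖) :
    UnitarilyIrreducible (triToeplitz n a b c) :=
  triToeplitz_unitarilyIrreducible_general a b c hbc
end
end

section
/- Let n ≥ 3, let a, b, c ∈ ℂ with |b| ≠ |c|, and let A' be the matrix obtained from T_n(a, b, c) by swapping the (j, j+1) and (j+1, j) entries for every odd j (so A' has all diagonal entries a and, for 1 ≤ j ≤ n−1, (A')_{j,j+1} = c and (A')_{j+1,j} = b when j is odd, while (A')_{j,j+1} = b and (A')_{j+1,j} = c when j is even). Then A' is unitarily reducible: there exists a subspace L ⊆ ℂ^n with 0 < dim L < n invariant under both A' and (A')*. -/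
/-!
Write `T = a • 1 + b • P + c • Pᵀ`, where `P` is the real `0`-`1` matrix with `P j k = 1` iff `j`
is odd and `|j - k| = 1`; then `Tᴴ` has the same form. Both `P` and `Pᵀ` square to zero, so
`ker Pᵀ ≠ 0` and `Pᵀ * P` maps `ker Pᵀ` into itself. An eigenvector `v` of it there spans, together
with `P v`, a subspace of dimension `1` or `2` invariant under `P` and `Pᵀ`, hence under `T` and `Tᴴ`.
-/

open Matrix Complex

noncomputable section

/-- The matrix obtained from the tridiagonal Toeplitz matrix `T_n(a,b,c)` by swapping the
`(j, j+1)` and `(j+1, j)` entries for every odd (1-based) `j`.  Indices of `Fin n` are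
0-based, so 1-based odd `j` corresponds to 0-based even `j`. -/
def triToeplitzSwapped (n : ℕ) (a b c : ℂ) : Matrix (Fin n) (Fin n) ℂ :=
  Matrix.of fun j k =>
    if (j : ℕ) = (k : ℕ) then a
    else if (k : ℕ) = (j : ℕ) + 1 then (if Even (j : ℕ) then c else b)
    else if (j : ℕ) = (k : ℕ) + 1 then (if Even (k : ℕ) then b else c)
    else 0

open Module

section Semiring

variable {R M : Type*} [Semiring R] [AddCommMonoid M] [Module R M]

theorem Module.End.exists_ne_zero_apply_eq_zero_of_mul_self_eq_zero [Nontrivial M]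
    {g : Module.End R M} (hg : g * g = 0) : ∃ v, v ≠ 0 ∧ g v = 0 := by
  obtain ⟨w, hw⟩ := exists_ne (0 : M)
  by_cases hgw : g w = 0
  · exact ⟨w, hw, hgw⟩
  · exact ⟨g w, hgw, LinearMap.congr_fun hg w⟩

theorem Module.End.span_pair_invariant_of_mul_self_eq_zero {f g : Module.End R M}
    (hf : f * f = 0) {v : M} {μ : R} (hgv : g v = 0) (hgfv : g (f v) = μ • v) :
    (∀ x ∈ Submodule.span R {v, f v}, f x ∈ Submodule.span R {v, f v}) ∧
      ∀ x ∈ Submodule.span R {v, f v}, g x ∈ Submodule.span R {v, f v} := by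
  have invariant_of_generators {h : Module.End R M} (hv : h v ∈ Submodule.span R {v, f v})
      (hfv : h (f v) ∈ Submodule.span R {v, f v}) :
      ∀ x ∈ Submodule.span R {v, f v}, h x ∈ Submodule.span R {v, f v} := by
    intro x hx
    obtain ⟨s, t, rfl⟩ := Submodule.mem_span_pair.mp hx
    rw [map_add, map_smul, map_smul]
    exact add_mem (Submodule.smul_mem _ s hv) (Submodule.smul_mem _ t hfv)
  have hv : v ∈ Submodule.span R {v, f v} := Submodule.subset_span (by simp)
  refine ⟨invariant_of_generators ?_ ?_, invariant_of_generators ?_ ?_⟩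
  · exact Submodule.subset_span (by simp)
  · rw [show f (f v) = 0 from LinearMap.congr_fun hf v]
    exact zero_mem _
  · rw [hgv]
    exact zero_mem _
  · rw [hgfv]
    exact Submodule.smul_mem _ _ hv

end Semiring

section Field

variable {K V : Type*} [Field K] [AddCommGroup V] [Module K V]

theorem Module.End.exists_eigenvector_mul_mem_ker_of_mul_self_eq_zero [IsAlgClosed K]
    [FiniteDimensional K V] [Nontrivial V] (f : Module.End K V) {g : Module.End K V}
    (hg : g * g = 0) : ∃ v, v ≠ 0 ∧ g v = 0 ∧ ∃ μ : K, g (f v) = μ • v := by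
  have hker : ∀ x ∈ LinearMap.ker g, (g * f) x ∈ LinearMap.ker g :=
    fun x _ ↦ LinearMap.congr_fun hg (f x)
  obtain ⟨v₀, hv₀, hgv₀⟩ := exists_ne_zero_apply_eq_zero_of_mul_self_eq_zero hg
  have : Nontrivial (LinearMap.ker g) :=
    ⟨⟨⟨v₀, hgv₀⟩, 0, fun h ↦ hv₀ (congrArg Subtype.val h)⟩⟩
  obtain ⟨μ, hμ⟩ := exists_eigenvalue ((g * f).restrict hker)
  obtain ⟨⟨v, hgv⟩, hv⟩ := hμ.exists_hasEigenvector
  refine ⟨v, fun h ↦ hv.2 (Subtype.ext h), hgv, μ, ?_⟩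
  simpa using congrArg Subtype.val hv.apply_eq_smul

theorem Module.End.exists_common_invariant_submodule_finrank_le_two [IsAlgClosed K]
    [FiniteDimensional K V] [Nontrivial V] {f g : Module.End K V} (hf : f * f = 0)
    (hg : g * g = 0) :
    ∃ L : Submodule K V, 0 < finrank K L ∧ finrank K L ≤ 2 ∧
      (∀ x ∈ L, f x ∈ L) ∧ ∀ x ∈ L, g x ∈ L := by
  classical
  obtain ⟨v, hv, hgv, μ, hgfv⟩ := exists_eigenvector_mul_mem_ker_of_mul_self_eq_zero f hg
  refine ⟨Submodule.span K {v, f v}, ?_, ?_, span_pair_invariant_of_mul_self_eq_zero hf hgv hgfv⟩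
  · refine Submodule.one_le_finrank_iff.mpr fun h ↦ hv ?_
    simpa [h] using (Submodule.subset_span (by simp) : v ∈ Submodule.span K {v, f v})
  · have := finrank_span_finset_le_card (R := K) ({v, f v} : Finset V)
    rw [Finset.coe_pair] at this
    exact this.trans Finset.card_le_two

end Field

def oddRowPathAdj (n : ℕ) : Matrix (Fin n) (Fin n) ℂ :=
  of fun j k ↦ if Odd (j : ℕ) ∧ ((j : ℕ) = k + 1 ∨ (k : ℕ) = j + 1) then 1 else 0

theorem oddRowPathAdj_mul_self {n : ℕ} : oddRowPathAdj n * oddRowPathAdj n = 0 := by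
  ext j k
  rw [mul_apply, Matrix.zero_apply]
  refine Finset.sum_eq_zero fun i _ ↦ ?_
  simp only [oddRowPathAdj, of_apply, mul_ite, mul_one, mul_zero]
  split_ifs with h₁ h₂ <;> first | rfl | (exfalso; simp only [Nat.odd_iff] at h₁ h₂; omega)

theorem triToeplitzSwapped_eq_smul_add {n : ℕ} (a b c : ℂ) :
    triToeplitzSwapped n a b c = a • 1 + b • oddRowPathAdj n + c • (oddRowPathAdj n)ᵀ := by
  ext j k
  simp only [triToeplitzSwapped, oddRowPathAdj, of_apply, Matrix.add_apply, Matrix.smul_apply,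
    one_apply, transpose_apply, smul_eq_mul, Fin.ext_iff, Nat.even_iff, Nat.odd_iff]
  split_ifs <;> first | (exfalso; omega) | ring

theorem conjTranspose_triToeplitzSwapped {n : ℕ} (a b c : ℂ) :
    (triToeplitzSwapped n a b c)ᴴ = triToeplitzSwapped n (star a) (star c) (star b) := by
  ext j k
  simp only [triToeplitzSwapped, conjTranspose_apply, of_apply]
  split_ifs <;> first | rfl | (exfalso; omega) | simp

theorem triToeplitzSwapped_mulVec_mem {n : ℕ} {L : Submodule ℂ (Fin n → ℂ)}
    (hP : ∀ x ∈ L, oddRowPathAdj n *ᵥ x ∈ L) (hPT : ∀ x ∈ L, (oddRowPathAdj n)ᵀ *ᵥ x ∈ L)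
    (a b c : ℂ) {x : Fin n → ℂ} (hx : x ∈ L) : triToeplitzSwapped n a b c *ᵥ x ∈ L := by
  rw [triToeplitzSwapped_eq_smul_add, add_mulVec, add_mulVec, smul_mulVec, smul_mulVec,
    smul_mulVec, one_mulVec]
  exact add_mem (add_mem (L.smul_mem a hx) (L.smul_mem b (hP x hx))) (L.smul_mem c (hPT x hx))

theorem Matrix.toLin'_mul_self_eq_zero {R n : Type*} [CommSemiring R] [Fintype n] [DecidableEq n]
    {M : Matrix n n R} (hM : M * M = 0) :
    toLin' M * toLin' M = 0 := by
  rw [Module.End.mul_eq_comp, ← toLin'_mul, hM, map_zero]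

theorem triToeplitzSwapped_unitarilyReducible_general {n : ℕ} (hn : 3 ≤ n) (a b c : ℂ) :
    ∃ L : Submodule ℂ (Fin n → ℂ), 0 < Module.finrank ℂ L ∧ Module.finrank ℂ L < n ∧
      (∀ x ∈ L, (triToeplitzSwapped n a b c).mulVec x ∈ L) ∧
      (∀ x ∈ L, (triToeplitzSwapped n a b c)ᴴ.mulVec x ∈ L) := by
  have : Nonempty (Fin n) := ⟨⟨0, by omega⟩⟩
  have hPTsq : (oddRowPathAdj n)ᵀ * (oddRowPathAdj n)ᵀ = 0 := by
    rw [← transpose_mul, oddRowPathAdj_mul_self, transpose_zero]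
  obtain ⟨L, hpos, hle, hP, hPT⟩ := Module.End.exists_common_invariant_submodule_finrank_le_two
    (toLin'_mul_self_eq_zero oddRowPathAdj_mul_self) (toLin'_mul_self_eq_zero hPTsq)
  refine ⟨L, hpos, by omega, fun x hx ↦ triToeplitzSwapped_mulVec_mem hP hPT a b c hx,
    fun x hx ↦ ?_⟩
  rw [conjTranspose_triToeplitzSwapped]
  exact triToeplitzSwapped_mulVec_mem hP hPT _ _ _ hx

/-- For `n ≥ 3` and `|b| ≠ |c|`, the matrix obtained from `T_n(a,b,c)` by swapping the
opposing off-diagonal entries in odd positions is unitarily reducible: some subspace `L`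
with `0 < dim L < n` is invariant under it and its conjugate transpose. -/
theorem triToeplitzSwapped_unitarilyReducible {n : ℕ} (hn : 3 ≤ n) (a b c : ℂ)
    (hbc : ‖b‖ ≠ ‖c‖) :
    ∃ L : Submodule ℂ (Fin n → ℂ), 0 < Module.finrank ℂ L ∧ Module.finrank ℂ L < n ∧
      (∀ x ∈ L, (triToeplitzSwapped n a b c).mulVec x ∈ L) ∧
      (∀ x ∈ L, (triToeplitzSwapped n a b c)ᴴ.mulVec x ∈ L) :=
  triToeplitzSwapped_unitarilyReducible_general hn a b c
end
end
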